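/- arXiv:1112.3568 — 5 statements merged into one kernel-verified Lean document; each statement's English description precedes it below -/
import Mathlib

section
/- Let A be an invertible N×N real matrix, b ∈ ℝ^N, and f(x) = A x − b. Suppose x₀ ∈ ℝ^N, and let x₁, x₂, … be generated from x₀ by the full-memory NKA iteration for f. Let x_j^G denote the j-th GMRES iterate for A x = b with starting point x₀ and r_j^G = A x_j^G − b its residual. If for some n > 0 we have r_{n−1}^G ≠ 0 and ‖r_j^G‖₂ < ‖r_{j−1}^G‖₂ for all 0 < j < n, then the (n+1)-st NKA iterate satisfies x_{n+1} = (I − A) x_n^G + b. -/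
/-!
By induction on `1 ≤ i ≤ n`, the NKA steps `x j - x (j + 1)`, `j < i`, span the Krylov space
`K_i`. Granting this, `x i + span {steps}` is the GMRES search space `x 0 + K_i`, and the
least-squares problem of NKA minimizes the residual over it; by strict convexity of the norm and
injectivity of `A` this minimizer is `x_i^G`, so `x (i + 1) = x_i^G - r_i^G`. The new step
therefore differs from `r_i^G` by an element of `K_i`, and `r_i^G ∈ K_{i+1} \ K_i`: if `r_i^G`
were `c r₀ + A w` with `w ∈ K_{i-1}`, then either `c = 1` and `x 0 + w` would already attain
`r_i^G` in `x 0 + K_{i-1}`, against strict decrease, or `r₀ ∈ A K_i` and `r_i^G = 0`.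
Hence the span grows to `K_{i+1}`.
-/

open Set Submodule

section SpanPrefix

variable {R M : Type*} [Semiring R] [AddCommMonoid M] [Module R M]

theorem range_fin_succ_eq_insert {α : Type*} (f : ℕ → α) (i : ℕ) :
    range (fun j : Fin (i + 1) => f j) = insert (f i) (range fun j : Fin i => f j) := by
  ext; simp [Fin.exists_fin_succ', or_comm, eq_comm]

theorem span_range_fin_mono (f : ℕ → M) {i j : ℕ} (h : i ≤ j) :
    span R (range fun k : Fin i => f k) ≤ span R (range fun k : Fin j => f k) :=
  span_mono <| range_subset_iff.2 fun k => ⟨Fin.castLE h k, rfl⟩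

theorem span_range_fin_succ (f : ℕ → M) (i : ℕ) :
    span R (range fun j : Fin (i + 1) => f j) = R ∙ f i ⊔ span R (range fun j : Fin i => f j) := by
  rw [range_fin_succ_eq_insert, span_insert]

end SpanPrefix

theorem span_singleton_sup_le_of_sub_mem {R M : Type*} [Ring R] [AddCommGroup M] [Module R M]
    {p : Submodule R M} {u v : M} (h : u - v ∈ p) : R ∙ u ⊔ p ≤ R ∙ v ⊔ p := by
  refine sup_le ((span_singleton_le_iff_mem _ _).2 ?_) le_sup_right
  rw [← sub_add_cancel u v, add_comm]
  exact add_mem (mem_sup_left (mem_span_singleton_self v)) (mem_sup_right h)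

theorem span_singleton_sup_eq_of_sub_mem {R M : Type*} [Ring R] [AddCommGroup M] [Module R M]
    {p : Submodule R M} {u v : M} (h : u - v ∈ p) : R ∙ u ⊔ p = R ∙ v ⊔ p :=
  le_antisymm (span_singleton_sup_le_of_sub_mem h)
    (span_singleton_sup_le_of_sub_mem (by simpa using p.neg_mem h))

theorem sub_mem_span_range_fin_sub {R M : Type*} [Ring R] [AddCommGroup M] [Module R M]
    (x : ℕ → M) (i : ℕ) : x i - x 0 ∈ span R (range fun j : Fin i => x j - x (j + 1)) := by
  have htel : x 0 - x i = ∑ j : Fin i, (x j - x (j + 1)) := by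
    rw [Fin.sum_univ_eq_sum_range (fun j => x j - x (j + 1)), Finset.sum_range_sub']
  rw [← neg_sub, htel]
  exact neg_mem (sum_mem fun j _ => subset_span ⟨j, rfl⟩)

theorem span_range_fin_succ_eq_of_mem_of_not_mem {K V : Type*} [DivisionRing K] [AddCommGroup V]
    [Module K V] {f : ℕ → V} {i : ℕ} {u : V} (hu : u ∈ span K (range fun j : Fin (i + 1) => f j))
    (hu' : u ∉ span K (range fun j : Fin i => f j)) :
    K ∙ u ⊔ span K (range fun j : Fin i => f j) = span K (range fun j : Fin (i + 1) => f j) := by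
  refine le_antisymm
    (sup_le ((span_singleton_le_iff_mem _ _).2 hu) (span_range_fin_mono f i.le_succ)) ?_
  rw [range_fin_succ_eq_insert] at hu ⊢
  rw [← span_insert]
  exact span_le.2 (insert_subset (mem_span_insert_exchange hu hu') (subset_span.trans
    (span_mono (subset_insert _ _))))

section Krylov

variable {R E : Type*} [Semiring R] [AddCommMonoid E] [Module R E] [TopologicalSpace E]

def krylov (A : E →L[R] E) (r : E) (j : ℕ) : Submodule R E :=
  span R (range fun k : Fin j => (A ^ k.1) r)

theorem krylov_mono (A : E →L[R] E) (r : E) {i j : ℕ} (h : i ≤ j) :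
    krylov A r i ≤ krylov A r j :=
  span_range_fin_mono (fun k => (A ^ k) r) h

theorem krylov_succ_eq_sup_map (A : E →L[R] E) (r : E) (m : ℕ) :
    krylov A r (m + 1) = R ∙ r ⊔ (krylov A r m).map (A : E →ₗ[R] E) := by
  have : (range fun k : Fin (m + 1) => (A ^ k.1) r) =
      insert r ((A : E →ₗ[R] E) '' range fun k : Fin m => (A ^ k.1) r) := by
    ext; simp [Fin.exists_fin_succ, eq_comm, Function.iterate_succ_apply']
  rw [krylov, krylov, this, span_insert, map_span]

theorem self_mem_krylov_succ (A : E →L[R] E) (r : E) (m : ℕ) : r ∈ krylov A r (m + 1) := by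
  rw [krylov_succ_eq_sup_map]
  exact mem_sup_left (mem_span_singleton_self r)

theorem apply_mem_krylov_succ (A : E →L[R] E) (r : E) {m : ℕ} {u : E} (hu : u ∈ krylov A r m) :
    A u ∈ krylov A r (m + 1) := by
  rw [krylov_succ_eq_sup_map]
  exact mem_sup_right (mem_map_of_mem hu)

end Krylov

theorem krylov_succ_eq_of_mem_of_not_mem {K E : Type*} [DivisionRing K] [AddCommGroup E]
    [Module K E] [TopologicalSpace E] {A : E →L[K] E} {r u : E} {m : ℕ}
    (hu : u ∈ krylov A r (m + 1)) (hu' : u ∉ krylov A r m) : K ∙ u ⊔ krylov A r m = krylov A r (m + 1) := by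
  unfold krylov at *
  exact span_range_fin_succ_eq_of_mem_of_not_mem (f := fun k => (A ^ k) r) hu hu'

section ResidualMinimizer

variable {E : Type*} [NormedAddCommGroup E] [NormedSpace ℝ E]

structure IsResidualMinimizer (A : E →L[ℝ] E) (b x₀ : E) (K : Submodule ℝ E) (u : E) : Prop where
  sub_mem : u - x₀ ∈ K
  norm_le : ∀ w, w - x₀ ∈ K → ‖A u - b‖ ≤ ‖A w - b‖

namespace IsResidualMinimizer

variable {A : E →L[ℝ] E} {b x₀ u u' : E} {K K' : Submodule ℝ E}

theorem norm_le_of_le (hu : IsResidualMinimizer A b x₀ K u)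
    (hu' : IsResidualMinimizer A b x₀ K' u') (h : K ≤ K') : ‖A u' - b‖ ≤ ‖A u - b‖ :=
  hu'.norm_le u (h hu.sub_mem)

theorem unique [StrictConvexSpace ℝ E] (hA : Function.Injective A)
    (hu : IsResidualMinimizer A b x₀ K u) (hu' : IsResidualMinimizer A b x₀ K u') : u = u' := by
  have hnorm : ‖A u - b‖ = ‖A u' - b‖ :=
    le_antisymm (hu.norm_le u' hu'.sub_mem) (hu'.norm_le u hu.sub_mem)
  have hmid : (1 / 2 : ℝ) • (u + u') - x₀ ∈ K := by
    convert K.smul_mem (1 / 2 : ℝ) (K.add_mem hu.sub_mem hu'.sub_mem) using 1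
    module
  have hres : A ((1 / 2 : ℝ) • (u + u')) - b = (1 / 2 : ℝ) • ((A u - b) + (A u' - b)) := by
    rw [map_smul, map_add]
    module
  have hAuu' : A u - b = A u' - b := by
    by_contra hne
    have hlt := (norm_midpoint_lt_iff hnorm).2 hne
    rw [← hres] at hlt
    exact (hu.norm_le _ hmid).not_gt hlt
  exact hA (sub_left_injective hAuu')

theorem residual_eq_zero (hu : IsResidualMinimizer A b x₀ K u) {k : E} (hk : k ∈ K)
    (hAk : A k = A x₀ - b) : A u - b = 0 := by
  have h := hu.norm_le (x₀ - k) (by simpa using K.neg_mem hk)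
  rw [map_sub, hAk, sub_sub_cancel, sub_self, norm_zero] at h
  exact norm_le_zero_iff.1 h

theorem residual_mem_krylov_succ {m : ℕ}
    (hu : IsResidualMinimizer A b x₀ (krylov A (A x₀ - b) m) u) :
    A u - b ∈ krylov A (A x₀ - b) (m + 1) := by
  have h : A u - b = (A x₀ - b) + A (u - x₀) := by
    rw [map_sub]
    abel
  rw [h]
  exact add_mem (self_mem_krylov_succ A _ m) (apply_mem_krylov_succ A _ hu.sub_mem)

theorem residual_not_mem_krylov {m : ℕ}
    (hu : IsResidualMinimizer A b x₀ (krylov A (A x₀ - b) m) u)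
    (hu' : IsResidualMinimizer A b x₀ (krylov A (A x₀ - b) (m + 1)) u')
    (hne : A u' - b ≠ 0) (hlt : ‖A u' - b‖ < ‖A u - b‖) :
    A u' - b ∉ krylov A (A x₀ - b) (m + 1) := by
  intro hmem
  rw [krylov_succ_eq_sup_map, mem_sup] at hmem
  obtain ⟨_, hc, _, ⟨w, hw, rfl⟩, hsum⟩ := hmem
  obtain ⟨c, rfl⟩ := mem_span_singleton.1 hc
  rw [ContinuousLinearMap.coe_coe] at hsum
  -- `A u' - b = c • r₀ + A w` with `w ∈ K_m`
  by_cases hc1 : c = 1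
  · have h := hu.norm_le (x₀ + w) (by simpa using hw)
    rw [map_add, add_sub_right_comm, ← one_smul ℝ (A x₀ - b), ← hc1, hsum] at h
    exact h.not_gt hlt
  · have hw' : A w - A (u' - x₀) = (1 - c) • (A x₀ - b) := by
      rw [map_sub, eq_sub_of_add_eq' hsum]
      module
    refine hne (hu'.residual_eq_zero (k := (1 - c)⁻¹ • (w - (u' - x₀)))
      (smul_mem _ _ (Submodule.sub_mem _ (krylov_mono A _ m.le_succ hw) hu'.sub_mem)) ?_)
    rw [map_smul, map_sub, hw', smul_smul, inv_mul_cancel₀ (sub_ne_zero.2 (Ne.symm hc1)),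
      one_smul]

end IsResidualMinimizer

end ResidualMinimizer

section NKA

variable {E : Type*} [NormedAddCommGroup E] [NormedSpace ℝ E]

theorem residual_sub_sum {ι : Type*} [Fintype ι] (A : E →L[ℝ] E) (b u : E) (c : ι → ℝ)
    (v : ι → E) : A (u - ∑ j, c j • v j) - b = (A u - b) - ∑ j, c j • A (v j) := by
  rw [map_sub, map_sum]
  simp only [map_smul]
  abel

/-- The step `x j - x (j + 1)` is the paper's `v_{j+1}` and its image under `A` is `w_{j+1}`. -/
structure IsNKAStep (A : E →L[ℝ] E) (b : E) (x : ℕ → E) (i : ℕ) (z : Fin i → ℝ) : Prop where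
  coeff_isMin : ∀ y : Fin i → ℝ,
    ‖(A (x i) - b) - ∑ j : Fin i, z j • A (x j - x (j + 1))‖ ≤
      ‖(A (x i) - b) - ∑ j : Fin i, y j • A (x j - x (j + 1))‖
  succ_eq : x (i + 1) = x i - (∑ j : Fin i, z j • (x j - x (j + 1)) +
    ((A (x i) - b) - ∑ j : Fin i, z j • A (x j - x (j + 1))))

namespace IsNKAStep

variable {A : E →L[ℝ] E} {b : E} {x : ℕ → E} {i : ℕ} {z : Fin i → ℝ}

theorem isResidualMinimizer (h : IsNKAStep A b x i z) :
    IsResidualMinimizer A b (x 0) (span ℝ (range fun j : Fin i => x j - x (j + 1)))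
      (x i - ∑ j : Fin i, z j • (x j - x (j + 1))) where
  sub_mem := by
    rw [sub_right_comm]
    exact Submodule.sub_mem _ (sub_mem_span_range_fin_sub x i)
      (sum_mem fun j _ => smul_mem _ _ (subset_span ⟨j, rfl⟩))
  norm_le w hw := by
    obtain ⟨c, hc⟩ := (mem_span_range_iff_exists_fun ℝ).1
      (Submodule.sub_mem _ (sub_mem_span_range_fin_sub x i) hw)
    have hw' : w = x i - ∑ j : Fin i, c j • (x j - x (j + 1)) := by
      rw [hc]
      abel
    rw [residual_sub_sum, hw', residual_sub_sum]
    exact h.coeff_isMin _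

theorem succ_eq_sub_residual (h : IsNKAStep A b x i z) :
    x (i + 1) = (x i - ∑ j : Fin i, z j • (x j - x (j + 1))) -
      (A (x i - ∑ j : Fin i, z j • (x j - x (j + 1))) - b) := by
  rw [h.succ_eq, residual_sub_sum]
  abel

theorem succ_eq_of_span_eq [StrictConvexSpace ℝ E] (h : IsNKAStep A b x i z)
    (hA : Function.Injective A) {K : Submodule ℝ E} {u : E}
    (hu : IsResidualMinimizer A b (x 0) K u)
    (hK : span ℝ (range fun j : Fin i => x j - x (j + 1)) = K) :
    x (i + 1) = u - (A u - b) ∧ x i - u ∈ K := by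
  have hxu : x i - ∑ j : Fin i, z j • (x j - x (j + 1)) = u :=
    (hK ▸ h.isResidualMinimizer).unique hA hu
  refine ⟨hxu ▸ h.succ_eq_sub_residual, ?_⟩
  rw [← hxu, sub_sub_cancel, ← hK]
  exact sum_mem fun j _ => smul_mem _ _ (subset_span ⟨j, rfl⟩)

end IsNKAStep

end NKA

section WalkerNi

variable {E : Type*} [NormedAddCommGroup E] [NormedSpace ℝ E] {A : E →L[ℝ] E} {b : E}
  {x₀ : E} {xG : ℕ → E} {n : ℕ}

theorem gmres_residual_not_mem_krylov
    (hG : ∀ j, IsResidualMinimizer A b x₀ (krylov A (A x₀ - b) j) (xG j))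
    (hne : A (xG (n - 1)) - b ≠ 0)
    (hdec : ∀ j : ℕ, 0 < j → j < n → ‖A (xG j) - b‖ < ‖A (xG (j - 1)) - b‖)
    {m : ℕ} (hm : 1 ≤ m) (hmn : m < n) : A (xG m) - b ∉ krylov A (A x₀ - b) m := by
  obtain ⟨k, rfl⟩ : ∃ k, m = k + 1 := ⟨m - 1, by omega⟩
  have hpos : A (xG (k + 1)) - b ≠ 0 := by
    intro h0
    have h := (hG (k + 1)).norm_le_of_le (hG (n - 1)) (krylov_mono A _ (by omega))
    rw [h0, norm_zero] at h
    exact hne (norm_le_zero_iff.1 h)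
  exact (hG k).residual_not_mem_krylov (hG (k + 1)) hpos (by simpa using hdec (k + 1) hm hmn)

theorem span_nka_steps_eq_krylov [StrictConvexSpace ℝ E] (hA : Function.Injective A)
    {x : ℕ → E} {z : (i : ℕ) → Fin i → ℝ} (hx1 : x 1 = x 0 - (A (x 0) - b))
    (hstep : ∀ i, 1 ≤ i → IsNKAStep A b x i (z i))
    (hG : ∀ j, IsResidualMinimizer A b (x 0) (krylov A (A (x 0) - b) j) (xG j))
    (hne : A (xG (n - 1)) - b ≠ 0)
    (hdec : ∀ j : ℕ, 0 < j → j < n → ‖A (xG j) - b‖ < ‖A (xG (j - 1)) - b‖) :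
    ∀ i, 1 ≤ i → i ≤ n →
      span ℝ (range fun j : Fin i => x j - x (j + 1)) = krylov A (A (x 0) - b) i := by
  intro i hi
  induction i, hi using Nat.le_induction with
  | base =>
    intro _
    rw [krylov, span_range_fin_succ (fun j => x j - x (j + 1)),
      span_range_fin_succ (fun k => (A ^ k) (A (x 0) - b)), hx1]
    simp
  | succ m hm ih =>
    intro hmn
    have hspan := ih (by omega)
    obtain ⟨hnext, hdiff⟩ := (hstep m hm).succ_eq_of_span_eq hA (hG m) hspan
    have hstep_sub : x m - x (m + 1) - (A (xG m) - b) ∈ krylov A (A (x 0) - b) m := by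
      rw [hnext]
      convert hdiff using 1
      abel
    rw [span_range_fin_succ (fun j => x j - x (j + 1)), hspan,
      span_singleton_sup_eq_of_sub_mem hstep_sub]
    exact krylov_succ_eq_of_mem_of_not_mem (hG m).residual_mem_krylov_succ
      (gmres_residual_not_mem_krylov hG hne hdec hm hmn)

end WalkerNi

/-- **Walker–Ni theorem for full-memory NKA applied to a linear problem.**
`A` is an invertible `N × N` real matrix (represented as a continuous linear map on
`EuclideanSpace ℝ (Fin N)`), `f x = A x - b`, and `x 0, x 1, x 2, …` is the full-memory
NKA iteration: `x 1 = x 0 - f (x 0)` and, for `i ≥ 1`,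
`x (i+1) = x i - (∑ⱼ z i j • v j + (f (x i) - ∑ⱼ z i j • w j))`, where
`v j = x j - x (j+1)`, `w j = A v j` (for `j = 0, …, i-1`, i.e. the paper's `v₁, …, vᵢ`),
and `z i` minimizes `‖f (x i) - ∑ⱼ y j • w j‖₂` over `y : Fin i → ℝ`.
`xG j` is the `j`-th GMRES iterate: the minimizer of `‖A u - b‖₂` over the affine space
`x 0 + K j`, where `K j = span {r₀, A r₀, …, A^(j-1) r₀}` and `r₀ = A (x 0) - b`.
If `r_{n-1}^G ≠ 0` and `‖r_j^G‖ < ‖r_{j-1}^G‖` for all `0 < j < n`, then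
`x (n+1) = (I - A) (xG n) + b`. -/
theorem stmt_0 (N : ℕ)
    (A : EuclideanSpace ℝ (Fin N) →L[ℝ] EuclideanSpace ℝ (Fin N))
    (hA : Function.Bijective ⇑A)
    (b : EuclideanSpace ℝ (Fin N))
    (x : ℕ → EuclideanSpace ℝ (Fin N))
    (z : (i : ℕ) → Fin i → ℝ)
    (hx1 : x 1 = x 0 - (A (x 0) - b))
    (hmin : ∀ i : ℕ, 1 ≤ i → ∀ y : Fin i → ℝ,
      ‖(A (x i) - b) - ∑ j : Fin i, z i j • A (x j.1 - x (j.1 + 1))‖ ≤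
        ‖(A (x i) - b) - ∑ j : Fin i, y j • A (x j.1 - x (j.1 + 1))‖)
    (hupd : ∀ i : ℕ, 1 ≤ i →
      x (i + 1) = x i - (∑ j : Fin i, z i j • (x j.1 - x (j.1 + 1)) +
        ((A (x i) - b) - ∑ j : Fin i, z i j • A (x j.1 - x (j.1 + 1)))))
    (xG : ℕ → EuclideanSpace ℝ (Fin N))
    (hGmem : ∀ j : ℕ, xG j - x 0 ∈
      Submodule.span ℝ (Set.range fun k : Fin j => (A ^ k.1) (A (x 0) - b)))
    (hGmin : ∀ j : ℕ, ∀ u : EuclideanSpace ℝ (Fin N),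
      u - x 0 ∈ Submodule.span ℝ (Set.range fun k : Fin j => (A ^ k.1) (A (x 0) - b)) →
      ‖A (xG j) - b‖ ≤ ‖A u - b‖)
    (n : ℕ) (hn : 0 < n)
    (hne : A (xG (n - 1)) - b ≠ 0)
    (hdec : ∀ j : ℕ, 0 < j → j < n → ‖A (xG j) - b‖ < ‖A (xG (j - 1)) - b‖) :
    x (n + 1) = xG n - A (xG n) + b := by
  have hstep : ∀ i, 1 ≤ i → IsNKAStep A b x i (z i) := fun i hi => ⟨hmin i hi, hupd i hi⟩
  have hG : ∀ j, IsResidualMinimizer A b (x 0) (krylov A (A (x 0) - b) j) (xG j) :=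
    fun j => ⟨hGmem j, hGmin j⟩
  have hspan := span_nka_steps_eq_krylov hA.1 hx1 hstep hG hne hdec n hn le_rfl
  rw [((hstep n hn).succ_eq_of_span_eq hA.1 (hG n) hspan).1]
  abel
end

section
/- Let A be an invertible N×N real matrix, b, x₀ ∈ ℝ^N, and v₁, …, v_n ∈ ℝ^N. Set x_n = x₀ − Σ_{i=1}^n v_i, w_i = A v_i, and r₀ = A x₀ − b, and assume w_n ≠ 0. Let z ∈ ℝ^n satisfy ‖(A x_n − b) − Σ_{i=1}^n z_i w_i‖₂ ≤ ‖(A x_n − b) − Σ_{i=1}^n y_i w_i‖₂ for all y ∈ ℝ^n, let ε > 0, and let z′ ∈ ℝ^n agree with z except that z′_n = z_n ± ε ‖(A x_n − b) − Σ_{i=1}^n z_i w_i‖₂ / ‖w_n‖₂ (either choice of sign). If x_{n+1} = x_n − [ Σ_{i=1}^n z′_i v_i + ( (A x_n − b) − Σ_{i=1}^n z′_i w_i ) ], then ‖A x_{n+1} − b‖₂ ≤ (1 + ε) · ‖I − A‖ · inf { ‖r₀ − A v‖₂ : v ∈ span{v₁, …, v_n} }. -/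
/-- **The key one-step inequality (Eq. (A.1)) for the ε-modified NKA update.**
`A` is an invertible `N × N` real matrix, `v 0, …, v (n-1)` are the paper's `v₁, …, v_n`,
`x_n = x₀ - ∑ᵢ vᵢ`, `wᵢ = A vᵢ`, `r₀ = A x₀ - b`, and `w_n ≠ 0`.  The coefficients
`z` minimize `‖(A x_n - b) - ∑ᵢ yᵢ wᵢ‖₂`, and `z'` agrees with `z` except that
`z'_n = z_n ± ε ‖(A x_n - b) - ∑ᵢ zᵢ wᵢ‖₂ / ‖w_n‖₂` (either sign).  Then the next
iterate `x_{n+1} = x_n - (∑ᵢ z'ᵢ vᵢ + ((A x_n - b) - ∑ᵢ z'ᵢ wᵢ))` satisfies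
`‖A x_{n+1} - b‖₂ ≤ (1 + ε) ⬝ ‖I - A‖ ⬝ inf {‖r₀ - A v‖₂ : v ∈ span {v₁, …, v_n}}`. -/
theorem stmt_3 (N n : ℕ) (hn : 1 ≤ n)
    (A : EuclideanSpace ℝ (Fin N) →L[ℝ] EuclideanSpace ℝ (Fin N))
    (hA : Function.Bijective ⇑A)
    (b x0 : EuclideanSpace ℝ (Fin N))
    (v : Fin n → EuclideanSpace ℝ (Fin N))
    (xn : EuclideanSpace ℝ (Fin N))
    (hxn : xn = x0 - ∑ i : Fin n, v i)
    (hwn : ∀ j : Fin n, j.1 + 1 = n → A (v j) ≠ 0)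
    (z z' : Fin n → ℝ) (ε : ℝ) (hε : 0 < ε)
    (hz : ∀ y : Fin n → ℝ,
      ‖(A xn - b) - ∑ i : Fin n, z i • A (v i)‖ ≤ ‖(A xn - b) - ∑ i : Fin n, y i • A (v i)‖)
    (hz'agree : ∀ j : Fin n, j.1 + 1 ≠ n → z' j = z j)
    (hz'last : ∀ j : Fin n, j.1 + 1 = n →
      z' j = z j + ε * ‖(A xn - b) - ∑ i : Fin n, z i • A (v i)‖ / ‖A (v j)‖ ∨
      z' j = z j - ε * ‖(A xn - b) - ∑ i : Fin n, z i • A (v i)‖ / ‖A (v j)‖)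
    (xnp1 : EuclideanSpace ℝ (Fin N))
    (hxnp1 : xnp1 = xn - (∑ i : Fin n, z' i • v i +
      ((A xn - b) - ∑ i : Fin n, z' i • A (v i)))) :
    ‖A xnp1 - b‖ ≤
      (1 + ε) * ‖(1 : EuclideanSpace ℝ (Fin N) →L[ℝ] EuclideanSpace ℝ (Fin N)) - A‖ *
        sInf {c : ℝ | ∃ u ∈ Submodule.span ℝ (Set.range v), c = ‖(A x0 - b) - A u‖} := by
  have hj0lt : n - 1 < n := by omega
  set j0 : Fin n := ⟨n - 1, hj0lt⟩ with hj0
  have hj0n : (j0 : ℕ) + 1 = n := by simp [hj0]; omega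
  set s : EuclideanSpace ℝ (Fin N) := (A xn - b) - ∑ i : Fin n, z i • A (v i) with hs
  set s' : EuclideanSpace ℝ (Fin N) := (A xn - b) - ∑ i : Fin n, z' i • A (v i) with hs'
  have hwn0 : ‖A (v j0)‖ ≠ 0 := norm_ne_zero_iff.mpr (hwn j0 hj0n)
  -- s' = s - (z' j0 - z j0) • A (v j0)
  have hdiff : s' = s - (z' j0 - z j0) • A (v j0) := by
    have hsum : ∑ i : Fin n, z' i • A (v i) - ∑ i : Fin n, z i • A (v i)
        = (z' j0 - z j0) • A (v j0) := by
      rw [← Finset.sum_sub_distrib]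
      have : ∀ i : Fin n, z' i • A (v i) - z i • A (v i) = (z' i - z i) • A (v i) := by
        intro i; rw [sub_smul]
      simp_rw [this]
      rw [Finset.sum_eq_single j0]
      · intro i _ hi
        have : (i : ℕ) + 1 ≠ n := by
          intro h; apply hi; apply Fin.ext; simp [hj0]; omega
        rw [hz'agree i this]; simp
      · intro h; exact absurd (Finset.mem_univ j0) h
    rw [hs', hs, ← hsum]; abel
  have hnorm_diff : ‖(z' j0 - z j0) • A (v j0)‖ = ε * ‖s‖ := by
    rw [norm_smul, Real.norm_eq_abs]
    have habs : |z' j0 - z j0| = ε * ‖s‖ / ‖A (v j0)‖ := by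
      have hnn : 0 ≤ ε * ‖s‖ / ‖A (v j0)‖ :=
        div_nonneg (mul_nonneg hε.le (norm_nonneg _)) (norm_nonneg _)
      rcases hz'last j0 hj0n with h | h
      · rw [h, add_sub_cancel_left, abs_of_nonneg hnn]
      · rw [h, sub_sub_cancel_left, abs_neg, abs_of_nonneg hnn]
    rw [habs, div_mul_cancel₀ _ hwn0]
  have hs'le : ‖s'‖ ≤ (1 + ε) * ‖s‖ := by
    calc ‖s'‖ ≤ ‖s‖ + ‖(z' j0 - z j0) • A (v j0)‖ := by
          rw [hdiff]; exact norm_sub_le _ _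
      _ = ‖s‖ + ε * ‖s‖ := by rw [hnorm_diff]
      _ = (1 + ε) * ‖s‖ := by ring
  -- A xnp1 - b = (1 - A) s'
  have hkey : A xnp1 - b = ((1 : EuclideanSpace ℝ (Fin N) →L[ℝ] EuclideanSpace ℝ (Fin N)) - A) s' := by
    rw [hxnp1, hs']
    simp only [map_sub, map_add, map_sum, map_smul, smul_sub, Finset.sum_sub_distrib, ContinuousLinearMap.sub_apply,
      ContinuousLinearMap.one_apply]
    abel
  -- ‖s‖ ≤ sInf
  have hne : {c : ℝ | ∃ u ∈ Submodule.span ℝ (Set.range v), c = ‖(A x0 - b) - A u‖}.Nonempty :=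
    ⟨‖(A x0 - b) - A 0‖, 0, Submodule.zero_mem _, rfl⟩
  have hsinf : ‖s‖ ≤ sInf {c : ℝ | ∃ u ∈ Submodule.span ℝ (Set.range v), c = ‖(A x0 - b) - A u‖} := by
    apply le_csInf hne
    rintro c ⟨u, hu, rfl⟩
    obtain ⟨cf, hcf⟩ := (Submodule.mem_span_range_iff_exists_fun ℝ).mp hu
    have : (A x0 - b) - A u = (A xn - b) - ∑ i : Fin n, (cf i - 1) • A (v i) := by
      rw [hxn, ← hcf]
      simp only [map_sub, map_sum, map_smul, sub_smul, one_smul, Finset.sum_sub_distrib]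
      abel
    rw [this, hs]
    exact hz _
  have hinf_nonneg : 0 ≤ sInf {c : ℝ | ∃ u ∈ Submodule.span ℝ (Set.range v), c = ‖(A x0 - b) - A u‖} :=
    le_trans (norm_nonneg s) hsinf
  calc ‖A xnp1 - b‖ = ‖((1 : EuclideanSpace ℝ (Fin N) →L[ℝ] EuclideanSpace ℝ (Fin N)) - A) s'‖ := by rw [hkey]
    _ ≤ ‖(1 : EuclideanSpace ℝ (Fin N) →L[ℝ] EuclideanSpace ℝ (Fin N)) - A‖ * ‖s'‖ :=
        ContinuousLinearMap.le_opNorm _ _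
    _ ≤ ‖(1 : EuclideanSpace ℝ (Fin N) →L[ℝ] EuclideanSpace ℝ (Fin N)) - A‖ * ((1 + ε) * ‖s‖) :=
        mul_le_mul_of_nonneg_left hs'le (norm_nonneg _)
    _ ≤ ‖(1 : EuclideanSpace ℝ (Fin N) →L[ℝ] EuclideanSpace ℝ (Fin N)) - A‖ * ((1 + ε) *
          sInf {c : ℝ | ∃ u ∈ Submodule.span ℝ (Set.range v), c = ‖(A x0 - b) - A u‖}) := by
        apply mul_le_mul_of_nonneg_left _ (norm_nonneg _)
        exact mul_le_mul_of_nonneg_left hsinf (by linarith)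
    _ = (1 + ε) * ‖(1 : EuclideanSpace ℝ (Fin N) →L[ℝ] EuclideanSpace ℝ (Fin N)) - A‖ *
          sInf {c : ℝ | ∃ u ∈ Submodule.span ℝ (Set.range v), c = ‖(A x0 - b) - A u‖} := by ring
end

section
/- Let A be an N×N real matrix, b, x₀ ∈ ℝ^N, v₁, …, v_n ∈ ℝ^N, and z ∈ ℝ^n arbitrary. Set x_n = x₀ − Σ_{i=1}^n v_i, w_i = A v_i, and r₀ = A x₀ − b. If x_{n+1} = x_n − [ Σ_{i=1}^n z_i v_i + ( (A x_n − b) − Σ_{i=1}^n z_i w_i ) ], then A x_{n+1} − b = (I − A) ( r₀ − A Σ_{i=1}^n (1 + z_i) v_i ). -/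
/-- **Residual identity for one (unmodified) NKA step on a linear residual.**
`A` is an `N × N` real matrix, `v 0, …, v (n-1)` are the paper's `v₁, …, v_n`,
`x_n = x₀ - ∑ᵢ vᵢ`, `wᵢ = A vᵢ`, `r₀ = A x₀ - b`, and `z` is arbitrary.  If
`x_{n+1} = x_n - (∑ᵢ zᵢ vᵢ + ((A x_n - b) - ∑ᵢ zᵢ wᵢ))`, then
`A x_{n+1} - b = (I - A) (r₀ - A ∑ᵢ (1 + zᵢ) vᵢ)`. -/
theorem stmt_4 (N n : ℕ)
    (A : EuclideanSpace ℝ (Fin N) →L[ℝ] EuclideanSpace ℝ (Fin N))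
    (b x0 : EuclideanSpace ℝ (Fin N))
    (v : Fin n → EuclideanSpace ℝ (Fin N))
    (z : Fin n → ℝ)
    (xn : EuclideanSpace ℝ (Fin N))
    (hxn : xn = x0 - ∑ i : Fin n, v i)
    (xnp1 : EuclideanSpace ℝ (Fin N))
    (hxnp1 : xnp1 = xn - (∑ i : Fin n, z i • v i +
      ((A xn - b) - ∑ i : Fin n, z i • A (v i)))) :
    A xnp1 - b = ((1 : EuclideanSpace ℝ (Fin N) →L[ℝ] EuclideanSpace ℝ (Fin N)) - A)
      ((A x0 - b) - A (∑ i : Fin n, (1 + z i) • v i)) := by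
  subst hxnp1 hxn
  simp only [ContinuousLinearMap.sub_apply, ContinuousLinearMap.one_apply,
    map_sub, map_add, map_sum, map_smul, add_smul, one_smul, smul_sub, Finset.sum_add_distrib, Finset.sum_sub_distrib]
  abel
end

section
/- Let x₀, …, x_n and g₀, …, g_n be vectors in ℝ^N, and let 1 ≤ M ≤ n. For j = n−M+1, …, n set v_j = x_{j−1} − x_j and w_j = g_{j−1} − g_j, and for i = 1, …, M set ṽ_i = x_n − x_{n−i} and w̃_i = g_n − g_{n−i}. Given any z̃ ∈ ℝ^M, define z_j = − Σ_{i = n−j+1}^{M} z̃_i for j = n−M+1, …, n. Then Σ_{i=1}^{M} z̃_i ṽ_i = Σ_{j=n−M+1}^{n} z_j v_j and Σ_{i=1}^{M} z̃_i w̃_i = Σ_{j=n−M+1}^{n} z_j w_j; consequently the Anderson Mixing update with β_n = 1, x_{n+1} = x_n − [ Σ_{i=1}^{M} z̃_i ṽ_i + ( g_n − Σ_{i=1}^{M} z̃_i w̃_i ) ], coincides with the NKA update x_{n+1} = x_n − [ Σ_{j=n−M+1}^{n} z_j v_j + ( g_n − Σ_{j=n−M+1}^{n} z_j w_j ) ].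 -/
lemma tele_aux {E : Type*} [AddCommGroup E] (f : ℕ → E) (a b : ℕ) (h : a ≤ b) :
    ∑ j ∈ Finset.Ioc a b, (f j - f (j - 1)) = f b - f a := by
  induction b, h using Nat.le_induction with
  | base => simp
  | succ b hb ih =>
    rw [Finset.sum_Ioc_succ_top (by omega), ih]
    simp only [Nat.add_sub_cancel]
    abel

lemma key_aux {E : Type*} [AddCommGroup E] [Module ℝ E] (f : ℕ → E) (n M : ℕ)
    (hM1 : 1 ≤ M) (hMn : M ≤ n) (zt z : ℕ → ℝ)
    (hz : ∀ j ∈ Finset.Icc (n - M + 1) n, z j = -∑ i ∈ Finset.Icc (n - j + 1) M, zt i) :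
    ∑ i ∈ Finset.Icc 1 M, zt i • (f n - f (n - i)) =
      ∑ j ∈ Finset.Icc (n - M + 1) n, z j • (f (j - 1) - f j) := by
  have h1 : ∀ i ∈ Finset.Icc 1 M, zt i • (f n - f (n - i)) =
      ∑ j ∈ Finset.Ioc (n - i) n, zt i • (f j - f (j - 1)) := by
    intro i hi
    simp only [Finset.mem_Icc] at hi
    rw [← Finset.smul_sum, tele_aux f _ _ (by omega)]
  rw [Finset.sum_congr rfl h1,
    Finset.sum_comm' (t' := Finset.Ioc (n - M) n)
      (s' := fun j => Finset.Icc (n - j + 1) M)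
      (by intro i j; simp only [Finset.mem_Icc, Finset.mem_Ioc]; omega)]
  have hIcc : Finset.Icc (n - M + 1) n = Finset.Ioc (n - M) n := Finset.Icc_add_one_left_eq_Ioc _ _
  rw [hIcc]
  apply Finset.sum_congr rfl
  intro j hj
  rw [← Finset.sum_smul, show (∑ i ∈ Finset.Icc (n - j + 1) M, zt i) = -z j by
      rw [hz j (hIcc ▸ hj)]; ring,
    neg_smul, ← smul_neg, neg_sub]

/-- **Equivalence of the Anderson Mixing (β = 1) and NKA updates (Eq. (6)).**
Given iterates `x 0, …, x n` and function values `g 0, …, g n` in `ℝ^N`, memory depth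
`1 ≤ M ≤ n`, Anderson differences `ṽ i = x n - x (n-i)`, `w̃ i = g n - g (n-i)`
(`i = 1, …, M`) and NKA differences `v j = x (j-1) - x j`, `w j = g (j-1) - g j`
(`j = n-M+1, …, n`), if the coefficients are related by
`z j = -∑_{i=n-j+1}^{M} z̃ i`, then the two linear combinations agree, and hence the
Anderson Mixing update `x n - (∑ᵢ z̃ i • ṽ i + (g n - ∑ᵢ z̃ i • w̃ i))` coincides with
the NKA update `x n - (∑ⱼ z j • v j + (g n - ∑ⱼ z j • w j))`. -/
theorem stmt_9 (N : ℕ) (x g : ℕ → EuclideanSpace ℝ (Fin N))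
    (n M : ℕ) (hM1 : 1 ≤ M) (hMn : M ≤ n)
    (zt z : ℕ → ℝ)
    (hz : ∀ j ∈ Finset.Icc (n - M + 1) n, z j = -∑ i ∈ Finset.Icc (n - j + 1) M, zt i) :
    (∑ i ∈ Finset.Icc 1 M, zt i • (x n - x (n - i))) =
      ∑ j ∈ Finset.Icc (n - M + 1) n, z j • (x (j - 1) - x j) ∧
    (∑ i ∈ Finset.Icc 1 M, zt i • (g n - g (n - i))) =
      ∑ j ∈ Finset.Icc (n - M + 1) n, z j • (g (j - 1) - g j) ∧
    x n - (∑ i ∈ Finset.Icc 1 M, zt i • (x n - x (n - i)) +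
        (g n - ∑ i ∈ Finset.Icc 1 M, zt i • (g n - g (n - i)))) =
      x n - (∑ j ∈ Finset.Icc (n - M + 1) n, z j • (x (j - 1) - x j) +
        (g n - ∑ j ∈ Finset.Icc (n - M + 1) n, z j • (g (j - 1) - g j))) := by
  have hx := key_aux x n M hM1 hMn zt z hz
  have hg := key_aux g n M hM1 hMn zt z hz
  exact ⟨hx, hg, by rw [hx, hg]⟩
end

section
/- Let A be an invertible N×N real matrix, b ∈ ℝ^N, and f(x) = A x − b. Suppose x₀ ∈ ℝ^N and x₁, x₂, … are generated by the full-memory NKA iteration for f, with v_j = x_{j−1} − x_j and w_j = A v_j. Let r_j^G denote the j-th GMRES residual for A x = b with starting point x₀. If for some n > 0 we have r_{n−1}^G ≠ 0 and ‖r_j^G‖₂ < ‖r_{j−1}^G‖₂ for all 0 < j < n, then span{w₁, …, w_n} = { A y : y ∈ K_n }, where K_n = span{r₀, A r₀, …, A^{n−1} r₀} and r₀ = A x₀ − b. -/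
set_option maxHeartbeats 1000000 in
private lemma nka_min_unique {E : Type*} [NormedAddCommGroup E] [InnerProductSpace ℝ E]
    (W : Submodule ℝ E) {a c : E} (hac : a - c ∈ W)
    (ha : ∀ w ∈ W, ‖a‖ ≤ ‖a + w‖) (hc : ∀ w ∈ W, ‖c‖ ≤ ‖c + w‖) : a = c := by
  have h1 : ‖a‖ ≤ ‖(2:ℝ)⁻¹ • (a + c)‖ := by
    have := ha ((2:ℝ)⁻¹ • (c - a)) (W.smul_mem _ (by simpa using W.neg_mem hac))
    convert this using 2
    module
  have h2 : ‖c‖ ≤ ‖(2:ℝ)⁻¹ • (a + c)‖ := by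
    have := hc ((2:ℝ)⁻¹ • (a - c)) (W.smul_mem _ hac)
    convert this using 2
    module
  have hpar := parallelogram_law_with_norm ℝ a c
  rw [norm_smul] at h1 h2
  simp only [norm_inv, Real.norm_ofNat] at h1 h2
  have h3 : ‖a - c‖ = 0 := by
    nlinarith [norm_nonneg (a - c), norm_nonneg (a + c), norm_nonneg a, norm_nonneg c]
  have := norm_eq_zero.mp h3
  linear_combination (norm := abel) this

set_option maxHeartbeats 1000000 in
/-- **The NKA search space equals `A · Kₙ` (observation after the Walker–Ni theorem).**
Under the hypotheses of the Walker–Ni theorem — `A` invertible, `f x = A x - b`,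
`x 0, x 1, …` the full-memory NKA iteration with `v j = x j - x (j+1)`,
`w j = A v j`, minimizing coefficients `z i`, `xG j` the `j`-th GMRES iterate, and
`r_{n-1}^G ≠ 0` with `‖r_j^G‖ < ‖r_{j-1}^G‖` for all `0 < j < n` — the span of
`w₁, …, w_n` equals `{A y : y ∈ K_n}`, where
`K_n = span {r₀, A r₀, …, A^(n-1) r₀}` and `r₀ = A (x 0) - b`. -/
theorem stmt_10 (N : ℕ)
    (A : EuclideanSpace ℝ (Fin N) →L[ℝ] EuclideanSpace ℝ (Fin N))
    (hA : Function.Bijective ⇑A)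
    (b : EuclideanSpace ℝ (Fin N))
    (x : ℕ → EuclideanSpace ℝ (Fin N))
    (z : (i : ℕ) → Fin i → ℝ)
    (hx1 : x 1 = x 0 - (A (x 0) - b))
    (hmin : ∀ i : ℕ, 1 ≤ i → ∀ y : Fin i → ℝ,
      ‖(A (x i) - b) - ∑ j : Fin i, z i j • A (x j.1 - x (j.1 + 1))‖ ≤
        ‖(A (x i) - b) - ∑ j : Fin i, y j • A (x j.1 - x (j.1 + 1))‖)
    (hupd : ∀ i : ℕ, 1 ≤ i →
      x (i + 1) = x i - (∑ j : Fin i, z i j • (x j.1 - x (j.1 + 1)) +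
        ((A (x i) - b) - ∑ j : Fin i, z i j • A (x j.1 - x (j.1 + 1)))))
    (xG : ℕ → EuclideanSpace ℝ (Fin N))
    (hGmem : ∀ j : ℕ, xG j - x 0 ∈
      Submodule.span ℝ (Set.range fun k : Fin j => (A ^ k.1) (A (x 0) - b)))
    (hGmin : ∀ j : ℕ, ∀ u : EuclideanSpace ℝ (Fin N),
      u - x 0 ∈ Submodule.span ℝ (Set.range fun k : Fin j => (A ^ k.1) (A (x 0) - b)) →
      ‖A (xG j) - b‖ ≤ ‖A u - b‖)
    (n : ℕ) (hn : 0 < n)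
    (hne : A (xG (n - 1)) - b ≠ 0)
    (hdec : ∀ j : ℕ, 0 < j → j < n → ‖A (xG j) - b‖ < ‖A (xG (j - 1)) - b‖) :
    Submodule.span ℝ (Set.range fun j : Fin n => A (x j.1 - x (j.1 + 1))) =
      Submodule.map (A : EuclideanSpace ℝ (Fin N) →ₗ[ℝ] EuclideanSpace ℝ (Fin N))
        (Submodule.span ℝ (Set.range fun k : Fin n => (A ^ k.1) (A (x 0) - b))) := by
  set r0 : EuclideanSpace ℝ (Fin N) := A (x 0) - b with hr0
  set A' : EuclideanSpace ℝ (Fin N) →ₗ[ℝ] EuclideanSpace ℝ (Fin N) :=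
    (A : EuclideanSpace ℝ (Fin N) →ₗ[ℝ] EuclideanSpace ℝ (Fin N)) with hA'def
  set K : ℕ → Submodule ℝ (EuclideanSpace ℝ (Fin N)) :=
    fun j => Submodule.span ℝ (Set.range fun k : Fin j => (A ^ k.1) r0) with hKdef
  have hA'app : ∀ y, A' y = A y := fun _ => rfl
  -- monotonicity of the Krylov spaces
  have hK_mono : ∀ {j m : ℕ}, j ≤ m → K j ≤ K m := by
    intro j m h
    apply Submodule.span_mono
    rintro _ ⟨k, rfl⟩
    exact ⟨⟨k.1, lt_of_lt_of_le k.2 h⟩, rfl⟩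
  have hgen_mem : ∀ {k j : ℕ}, k < j → (A ^ k) r0 ∈ K j := fun {k j} hk =>
    Submodule.subset_span ⟨⟨k, hk⟩, rfl⟩
  have hr0K : ∀ {j : ℕ}, 0 < j → r0 ∈ K j := by
    intro j hj
    simpa using hgen_mem hj (k := 0)
  have hAKmap : ∀ j : ℕ, Submodule.map A' (K j) ≤ K (j + 1) := by
    intro j
    rw [hKdef, Submodule.map_span, Submodule.span_le]
    rintro _ ⟨_, ⟨k, rfl⟩, rfl⟩
    have hAk : A' ((A ^ k.1) r0) = (A ^ (k.1 + 1)) r0 := by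
      rw [pow_succ']; rfl
    rw [SetLike.mem_coe, hAk]
    exact hgen_mem (Nat.succ_lt_succ k.2)
  have hr0_ne : r0 ≠ 0 := by
    intro h0
    apply hne
    have := hGmin (n - 1) (x 0) (by simp)
    rw [← hr0, h0, norm_zero] at this
    simpa using norm_le_zero_iff.mp this
  -- the Krylov generator of the next step is never in the previous space (j < n)
  have hnotmem : ∀ j < n, (A ^ j) r0 ∉ K j := by
    intro j hjn hmem
    rcases Nat.eq_zero_or_pos j with rfl | hj
    · have hrange : (Set.range fun k : Fin 0 => (A ^ k.1) r0) = (∅ : Set _) :=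
        Set.range_eq_empty _
      have hmem' : r0 ∈ (⊥ : Submodule ℝ (EuclideanSpace ℝ (Fin N))) := by
        simpa [hKdef, hrange, Submodule.span_empty] using hmem
      exact hr0_ne (Submodule.mem_bot _ |>.mp hmem')
    · have hmaple : Submodule.map A' (K j) ≤ K j := by
        rw [hKdef, Submodule.map_span, Submodule.span_le]
        rintro _ ⟨_, ⟨k, rfl⟩, rfl⟩
        have hAk : A' ((A ^ k.1) r0) = (A ^ (k.1 + 1)) r0 := by
          rw [pow_succ']; rfl
        rw [SetLike.mem_coe, hAk]
        show (A ^ (k.1 + 1)) r0 ∈ K j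
        rcases Nat.lt_or_ge (k.1 + 1) j with h | h
        · exact hgen_mem h
        · have : k.1 + 1 = j := le_antisymm k.2 h
          rw [this]; exact hmem
      have hmapeq : Submodule.map A' (K j) = K j := by
        refine Submodule.eq_of_le_of_finrank_le hmaple (le_of_eq ?_)
        exact (Submodule.equivMapOfInjective A' hA.injective (K j)).finrank_eq
      have hr0K : r0 ∈ K j := by
        have := hgen_mem hj (k := 0)
        simpa using this
      rw [← hmapeq] at hr0K
      obtain ⟨q, hq, hAq⟩ := hr0K
      have hsol : A (x 0 - q) - b = 0 := by
        have h2 : A q = r0 := hAq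
        rw [map_sub, h2, hr0]; abel
      apply hne
      have hmem' : x 0 - q - x 0 ∈ K (n - 1) := by
        have h3 : x 0 - q - x 0 = -q := by abel
        rw [h3]
        exact Submodule.neg_mem _ (hK_mono (Nat.le_sub_one_of_lt hjn) hq)
      have := hGmin (n - 1) (x 0 - q) hmem'
      rw [hsol, norm_zero] at this
      exact norm_le_zero_iff.mp this
  -- linear independence of the Krylov generators
  have hli : ∀ j ≤ n, LinearIndependent ℝ (fun k : Fin j => (A ^ k.1) r0) := by
    intro j hj
    induction j with
    | zero => exact linearIndependent_empty_type
    | succ m ih =>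
      have heq : (fun k : Fin (m+1) => (A ^ k.1) r0) =
          Fin.snoc (fun k : Fin m => (A ^ k.1) r0) ((A ^ m) r0) := by
        funext k
        refine Fin.lastCases ?_ ?_ k
        · simp
        · intro i; simp
      rw [heq, linearIndependent_fin_snoc]
      exact ⟨ih (le_of_lt hj), hnotmem m hj⟩
  have hfinrank : ∀ j ≤ n, Module.finrank ℝ (K j) = j := by
    intro j hj
    rw [hKdef]
    rw [finrank_span_eq_card (hli j hj), Fintype.card_fin]
  -- the GMRES residual lies in K (j+1)
  have hrGmem : ∀ j : ℕ, A (xG j) - b ∈ K (j + 1) := by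
    intro j
    have h1 : A' (xG j - x 0) ∈ K (j + 1) := hAKmap j ⟨_, hGmem j, rfl⟩
    have h2 : r0 ∈ K (j + 1) := hr0K (Nat.succ_pos j)
    have h3 : A (xG j) - b = A' (xG j - x 0) + r0 := by
      rw [hA'app, map_sub, hr0]; abel
    rw [h3]; exact add_mem h1 h2
  -- GMRES residual is minimal over perturbations by A K_j
  have hrGmin : ∀ i : ℕ, ∀ w ∈ Submodule.map A' (K i),
      ‖A (xG i) - b‖ ≤ ‖(A (xG i) - b) + w‖ := by
    intro i w hw
    obtain ⟨q, hq, rfl⟩ := hw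
    have h3 : xG i + q - x 0 = (xG i - x 0) + q := by abel
    have hu : xG i + q - x 0 ∈ K i := by rw [h3]; exact add_mem (hGmem i) hq
    have h4 : A (xG i + q) - b = (A (xG i) - b) + A' q := by
      rw [hA'app, map_add]; abel
    have := hGmin i (xG i + q) hu
    rw [h4] at this
    exact this
  -- the GMRES residual is not in K_i for 0 < i < n
  have hrG_notmem : ∀ i : ℕ, 0 < i → i < n → A (xG i) - b ∉ K i := by
    intro i hi hin hmem
    obtain ⟨m, rfl⟩ : ∃ m, i = m + 1 := ⟨i - 1, by omega⟩
    obtain ⟨c, hc⟩ := (Submodule.mem_span_range_iff_exists_fun ℝ).mp (hGmem (m + 1))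
    have hA'sum : A' (xG (m + 1) - x 0) = ∑ k : Fin (m + 1), c k • (A ^ (k.1 + 1)) r0 := by
      rw [← hc, map_sum]
      refine Finset.sum_congr rfl fun k _ => ?_
      rw [map_smul]
      congr 1
      rw [pow_succ']; rfl
    have hin1 : A' (xG (m + 1) - x 0) ∈ K (m + 1) := by
      have h5 : A' (xG (m + 1) - x 0) = (A (xG (m + 1)) - b) - r0 := by
        rw [hA'app, map_sub, hr0]; abel
      rw [h5]
      exact sub_mem hmem (hr0K (Nat.succ_pos m))
    have hclast : c (Fin.last m) = 0 := by
      by_contra hcne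
      have h6 : c (Fin.last m) • (A ^ (m + 1)) r0 =
          A' (xG (m + 1) - x 0) - ∑ k : Fin m, c k.castSucc • (A ^ (k.1 + 1)) r0 := by
        rw [hA'sum, Fin.sum_univ_castSucc]
        simp only [Fin.coe_castSucc, Fin.val_last]
        abel
      have h7 : c (Fin.last m) • (A ^ (m + 1)) r0 ∈ K (m + 1) := by
        rw [h6]
        refine sub_mem hin1 (Submodule.sum_mem _ fun k _ => Submodule.smul_mem _ _ ?_)
        exact hgen_mem (Nat.succ_lt_succ k.2)
      have h8 : (A ^ (m + 1)) r0 ∈ K (m + 1) := by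
        have := Submodule.smul_mem (K (m + 1)) (c (Fin.last m))⁻¹ h7
        rwa [inv_smul_smul₀ hcne] at this
      exact hnotmem (m + 1) hin h8
    have h9 : xG (m + 1) - x 0 ∈ K m := by
      rw [← hc, Fin.sum_univ_castSucc, hclast, zero_smul, add_zero]
      refine Submodule.sum_mem _ fun k _ => Submodule.smul_mem _ _ ?_
      exact hgen_mem (by simpa using k.2)
    have h10 := hGmin m (xG (m + 1)) h9
    have hd := hdec (m + 1) hi hin
    rw [Nat.add_sub_cancel] at hd
    linarith
  -- key step : the NKA minimal residual equals the GMRES residual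
  have hstep : ∀ i : ℕ, 1 ≤ i →
      Submodule.span ℝ (Set.range fun j : Fin i => x j.1 - x (j.1 + 1)) = K i →
      (A (x i) - b) - ∑ j : Fin i, z i j • A (x j.1 - x (j.1 + 1)) = A (xG i) - b := by
    intro i hi hspan
    have hWspan : Submodule.map A' (K i) =
        Submodule.span ℝ (Set.range fun j : Fin i => A (x j.1 - x (j.1 + 1))) := by
      rw [← hspan, Submodule.map_span, ← Set.range_comp]
      rfl
    refine nka_min_unique (Submodule.map A' (K i)) ?_ ?_ (hrGmin i)
    · -- the difference lies in A K_i
      have hxmem : x 0 - x i ∈ K i := by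
        have htel : ∑ j ∈ Finset.range i, (x j - x (j + 1)) = x 0 - x i :=
          Finset.sum_range_sub' x i
        rw [← htel]
        refine Submodule.sum_mem _ fun j hj => ?_
        rw [← hspan]
        exact Submodule.subset_span ⟨⟨j, Finset.mem_range.mp hj⟩, rfl⟩
      have hvsum : ∑ j : Fin i, z i j • (x j.1 - x (j.1 + 1)) ∈ K i :=
        Submodule.sum_mem _ fun j _ => Submodule.smul_mem _ _
          (by rw [← hspan]; exact Submodule.subset_span ⟨j, rfl⟩)
      have hq : (x i - x 0) - (∑ j : Fin i, z i j • (x j.1 - x (j.1 + 1))) - (xG i - x 0)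
          ∈ K i := by
        refine sub_mem (sub_mem ?_ hvsum) (hGmem i)
        have : x i - x 0 = -(x 0 - x i) := by abel
        rw [this]; exact Submodule.neg_mem _ hxmem
      refine ⟨_, hq, ?_⟩
      simp only [map_sub, map_sum, map_smul, ContinuousLinearMap.coe_coe]
      abel
    · -- minimality of the NKA residual
      intro w hw
      obtain ⟨c, hcw⟩ := (Submodule.mem_span_range_iff_exists_fun ℝ).mp (hWspan ▸ hw)
      have hmin' := hmin i hi (fun j => z i j - c j)
      have heq : (A (x i) - b) - ∑ j : Fin i, (z i j - c j) • A (x j.1 - x (j.1 + 1)) =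
          ((A (x i) - b) - ∑ j : Fin i, z i j • A (x j.1 - x (j.1 + 1))) +
            ∑ j : Fin i, c j • A (x j.1 - x (j.1 + 1)) := by
        simp only [sub_smul, Finset.sum_sub_distrib]
        abel
      rw [← hcw, ← heq]
      exact hmin'
  -- main induction
  have hmain : ∀ i : ℕ, i ≤ n → 1 ≤ i →
      Submodule.span ℝ (Set.range fun j : Fin i => x j.1 - x (j.1 + 1)) = K i := by
    intro i
    induction i with
    | zero => omega
    | succ m ih =>
      intro hin _
      rcases Nat.eq_zero_or_pos m with rfl | hm
      · -- base case : span {v₁} = K 1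
        have hfun : (fun j : Fin 1 => x j.1 - x (j.1 + 1)) =
            fun k : Fin 1 => (A ^ k.1) r0 := by
          funext k
          rw [Subsingleton.elim k 0]
          show x 0 - x 1 = (A ^ 0) r0
          rw [hx1, pow_zero]
          simp [sub_sub_cancel]
        rw [hKdef, hfun]
      · -- inductive step
        have hs := ih (by omega) hm
        have hkey := hstep m hm hs
        have hv : x m - x (m + 1) =
            ∑ j : Fin m, z m j • (x j.1 - x (j.1 + 1)) + (A (xG m) - b) := by
          rw [hupd m hm, hkey]
          abel
        have hle : Submodule.span ℝ
            (Set.range fun j : Fin (m + 1) => x j.1 - x (j.1 + 1)) ≤ K (m + 1) := by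
          rw [Submodule.span_le]
          rintro _ ⟨j, rfl⟩
          rw [SetLike.mem_coe]
          show x j.1 - x (j.1 + 1) ∈ K (m + 1)
          rcases Nat.lt_or_ge j.1 m with hj | hj
          · have : x j.1 - x (j.1 + 1) ∈ K m := by
              rw [← hs]; exact Submodule.subset_span ⟨⟨j.1, hj⟩, rfl⟩
            exact hK_mono (Nat.le_succ m) this
          · have hjm : j.1 = m := by omega
            have heq2 : x j.1 - x (j.1 + 1) = x m - x (m + 1) := by rw [hjm]
            rw [heq2, hv]
            refine add_mem (hK_mono (Nat.le_succ m) ?_) (hrGmem m)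
            exact Submodule.sum_mem _ fun j' _ => Submodule.smul_mem _ _
              (by rw [← hs]; exact Submodule.subset_span ⟨j', rfl⟩)
        have hKmS : K m ≤ Submodule.span ℝ
            (Set.range fun j : Fin (m + 1) => x j.1 - x (j.1 + 1)) := by
          rw [← hs]
          apply Submodule.span_mono
          rintro _ ⟨j, rfl⟩
          exact ⟨⟨j.1, by omega⟩, rfl⟩
        have hrGS : A (xG m) - b ∈ Submodule.span ℝ
            (Set.range fun j : Fin (m + 1) => x j.1 - x (j.1 + 1)) := by
          have h7 : A (xG m) - b = (x m - x (m + 1)) -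
              ∑ j : Fin m, z m j • (x j.1 - x (j.1 + 1)) := by
            rw [hv]; abel
          rw [h7]
          refine sub_mem (Submodule.subset_span ⟨Fin.last m, rfl⟩) ?_
          exact Submodule.sum_mem _ fun j _ => Submodule.smul_mem _ _
            (hKmS (by rw [← hs]; exact Submodule.subset_span ⟨j, rfl⟩))
        have hlt : K m < Submodule.span ℝ
            (Set.range fun j : Fin (m + 1) => x j.1 - x (j.1 + 1)) := by
          refine lt_of_le_of_ne hKmS fun h => ?_
          exact hrG_notmem m hm (by omega) (by rw [h]; exact hrGS)
        have hfr : Module.finrank ℝ (K (m + 1)) ≤ Module.finrank ℝ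
            (Submodule.span ℝ (Set.range fun j : Fin (m + 1) => x j.1 - x (j.1 + 1))) := by
          have h11 := Submodule.finrank_lt_finrank_of_lt hlt
          rw [hfinrank m (by omega)] at h11
          rw [hfinrank (m + 1) hin]
          omega
        exact Submodule.eq_of_le_of_finrank_le hle hfr

  -- conclusion
  have hcomp : (fun j : Fin n => A (x j.1 - x (j.1 + 1))) =
      ⇑A' ∘ (fun j : Fin n => x j.1 - x (j.1 + 1)) := rfl
  rw [hcomp, Set.range_comp, ← Submodule.map_span, hmain n le_rfl hn]
end
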